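/- arXiv:2003.03908 — 9 statements merged into one kernel-verified Lean document; each statement's English description precedes it below -/
import Mathlib

section
/- Let ξ = (ω, v, x) ∈ ℝ⁹ with ω ≠ 0. Then the matrix exponential of ξ^∧ is exp_m(ξ^∧) = [[exp_m((ω)ₓ), N(ω)v, N(ω)x],[0₁ₓ₃, 1, 0],[0₁ₓ₃, 0, 1]], where N(ω) = I₃ + ((1 − cos‖ω‖)/‖ω‖²)(ω)ₓ + ((‖ω‖ − sin‖ω‖)/‖ω‖³)((ω)ₓ)². -/
open Matrix

noncomputable section

abbrev M3 := Matrix (Fin 3) (Fin 3) ℝ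
abbrev M5 := Matrix (Fin 5) (Fin 5) ℝ
abbrev V3 := Fin 3 → ℝ
abbrev V9 := V3 × V3 × V3

/-- Skew-symmetric cross-product matrix `(ω)ₓ`. -/
def skew (ω : V3) : M3 := !![0, -ω 2, ω 1; ω 2, 0, -ω 0; -ω 1, ω 0, 0]

/-- 5×5 block matrix `[[A, v, x],[0₁ₓ₃, d, 0],[0₁ₓ₃, 0, e]]`. -/
def blk (A : M3) (v x : V3) (d e : ℝ) : M5 :=
  !![A 0 0, A 0 1, A 0 2, v 0, x 0;
     A 1 0, A 1 1, A 1 2, v 1, x 1;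
     A 2 0, A 2 1, A 2 2, v 2, x 2;
     0, 0, 0, d, 0;
     0, 0, 0, 0, e]

/-- Element of `SE₂(3)` built from rotation `R`, velocity `V`, position `X`. -/
def se23 (R : M3) (V X : V3) : M5 := blk R V X 1 1

/-- The hat map `ξ^∧` of `ξ = (ω, v, x) ∈ ℝ⁹`. -/
def hat (ω v x : V3) : M5 := blk (skew ω) v x 0 0

def hat9 (ξ : V9) : M5 := hat ξ.1 ξ.2.1 ξ.2.2

def IsSO3 (R : M3) : Prop := Rᵀ * R = 1 ∧ R.det = 1

def IsSE23 (T : M5) : Prop := ∃ R V X, IsSO3 R ∧ T = se23 R V X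

/-- Rotation block of a 5×5 matrix. -/
def Rof (T : M5) : M3 := Matrix.of fun i j => T (Fin.castLE (by omega) i) (Fin.castLE (by omega) j)

/-- Velocity column of a 5×5 matrix. -/
def Vof (T : M5) : V3 := fun i => T (Fin.castLE (by omega) i) 3

/-- Position column of a 5×5 matrix. -/
def Xof (T : M5) : V3 := fun i => T (Fin.castLE (by omega) i) 4

/-- Adjoint of `T ∈ SE₂(3)` acting on `ξ = (ω, v, x) ∈ ℝ⁹`:
  `[[R, 0, 0],[(V)ₓR, R, 0],[(X)ₓR, 0, R]]`. -/
def Ad (T : M5) (ξ : V9) : V9 :=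
  (Rof T *ᵥ ξ.1,
   (skew (Vof T) * Rof T) *ᵥ ξ.1 + Rof T *ᵥ ξ.2.1,
   (skew (Xof T) * Rof T) *ᵥ ξ.1 + Rof T *ᵥ ξ.2.2)

/-- `f(T)` : places the velocity column of `T` in the position column. -/
def fmap (T : M5) : M5 := blk 0 0 (Vof T) 0 0

/-- `Φ_t` : maps `[[R,V,X],...]` to `[[R,V,X+tV],...]` (acting on the top three rows). -/
def Phi (t : ℝ) (T : M5) : M5 :=
  Matrix.of fun i j => if (i : ℕ) < 3 ∧ (j : ℕ) = 4 then T i j + t * T i 3 else T i j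

/-- The linear map `F : (ω,v,x) ↦ (ω, v, x + Δt·v)`. -/
def Fmap (Δt : ℝ) (ξ : V9) : V9 := (ξ.1, ξ.2.1, ξ.2.2 + Δt • ξ.2.1)

/-- Euclidean norm of a vector in `ℝ³`. -/
def enorm3 (ω : V3) : ℝ := Real.sqrt (ω 0 ^ 2 + ω 1 ^ 2 + ω 2 ^ 2)

/-- `N(ω) = I₃ + ((1 − cos‖ω‖)/‖ω‖²)(ω)ₓ + ((‖ω‖ − sin‖ω‖)/‖ω‖³)((ω)ₓ)²`. -/
def Nmat (ω : V3) : M3 :=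
  1 + ((1 - Real.cos (enorm3 ω)) / enorm3 ω ^ 2) • skew ω
    + ((enorm3 ω - Real.sin (enorm3 ω)) / enorm3 ω ^ 3) • (skew ω * skew ω)

/-! With `Ω = (ω)ₓ`, the powers of `ξ^∧` are `(ξ^∧)^(n+1) = [[Ω^(n+1), Ωⁿ v, Ωⁿ x], [0, 0, 0]]`,
so summing the exponential series gives the rotation block `exp Ω` and the translation blocks
`N v`, `N x` with `N = ∑ Ωⁿ / (n+1)!`. Since `Ω³ = -‖ω‖² Ω`, the odd and even parts of this series
collapse onto `Ω` and `Ω²`, with the Taylor series of `(1 - cos θ) / θ²` and `(θ - sin θ) / θ³`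
as coefficients. -/

open scoped Nat

theorem Real.hasSum_one_sub_cos_div_sq {θ : ℝ} (hθ : θ ≠ 0) :
    HasSum (fun k : ℕ => ((2 * k + 2)! : ℝ)⁻¹ * (-θ ^ 2) ^ k) ((1 - Real.cos θ) / θ ^ 2) := by
  have h := ((hasSum_nat_add_iff' 1).mpr (Real.hasSum_cos θ)).div_const (-θ ^ 2)
  rw [Finset.sum_range_one, mul_zero, pow_zero, Nat.factorial_zero, Nat.cast_one, div_one,
    one_mul, div_neg, ← neg_div, neg_sub] at h
  refine h.congr_fun fun k => ?_
  rw [neg_pow, ← pow_mul, show 2 * (k + 1) = 2 * k + 2 by ring, pow_add, pow_succ (-1 : ℝ)]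
  field_simp
  ring

theorem Real.hasSum_sub_sin_div_pow_three {θ : ℝ} (hθ : θ ≠ 0) :
    HasSum (fun k : ℕ => ((2 * k + 3)! : ℝ)⁻¹ * (-θ ^ 2) ^ k) ((θ - Real.sin θ) / θ ^ 3) := by
  have h := ((hasSum_nat_add_iff' 1).mpr (Real.hasSum_sin θ)).div_const (-θ ^ 3)
  rw [Finset.sum_range_one, mul_zero, zero_add, pow_zero, pow_one, Nat.factorial_one,
    Nat.cast_one, div_one, one_mul, div_neg, ← neg_div, neg_sub] at h
  refine h.congr_fun fun k => ?_
  rw [neg_pow, ← pow_mul, show 2 * (k + 1) + 1 = 2 * k + 3 by ring, pow_succ θ (2 * k + 2),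
    pow_add, pow_succ (-1 : ℝ)]
  field_simp
  ring

section PowThree

variable {𝕜 R : Type*} [CommSemiring 𝕜] [Semiring R] [Algebra 𝕜 R] {A : R} {c : 𝕜}

theorem pow_two_mul_add_one_of_pow_three_eq_smul (h : A ^ 3 = c • A) (k : ℕ) :
    A ^ (2 * k + 1) = c ^ k • A := by
  induction k with
  | zero => simp
  | succ k ih =>
    rw [show 2 * (k + 1) + 1 = 2 * k + 1 + 2 by ring, pow_add, ih, smul_mul_assoc,
      ← pow_succ' A 2, h, smul_smul, ← pow_succ]

theorem pow_two_mul_add_two_of_pow_three_eq_smul (h : A ^ 3 = c • A) (k : ℕ) :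
    A ^ (2 * k + 2) = c ^ k • A ^ 2 := by
  rw [pow_succ, pow_two_mul_add_one_of_pow_three_eq_smul h, smul_mul_assoc, ← sq]

end PowThree

theorem hasSum_inv_factorial_succ_smul_pow_of_pow_three {R : Type*} [Ring R] [Algebra ℝ R]
    [TopologicalSpace R] [IsTopologicalAddGroup R] [ContinuousSMul ℝ R] {A : R} {θ : ℝ}
    (hθ : θ ≠ 0) (hA : A ^ 3 = (-θ ^ 2) • A) :
    HasSum (fun n : ℕ => ((n + 1)! : ℝ)⁻¹ • A ^ n)
      (1 + ((1 - Real.cos θ) / θ ^ 2) • A + ((θ - Real.sin θ) / θ ^ 3) • A ^ 2) := by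
  have hodd : HasSum (fun k : ℕ => ((2 * k + 2)! : ℝ)⁻¹ • A ^ (2 * k + 1))
      (((1 - Real.cos θ) / θ ^ 2) • A) :=
    ((Real.hasSum_one_sub_cos_div_sq hθ).smul_const A).congr_fun fun k => by
      rw [pow_two_mul_add_one_of_pow_three_eq_smul hA, smul_smul]
  have heven : HasSum (fun k : ℕ => ((2 * k + 3)! : ℝ)⁻¹ • A ^ (2 * k + 2))
      (((θ - Real.sin θ) / θ ^ 3) • A ^ 2) :=
    ((Real.hasSum_sub_sin_div_pow_three hθ).smul_const (A ^ 2)).congr_fun fun k => by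
      rw [pow_two_mul_add_two_of_pow_three_eq_smul hA, smul_smul]
  have htail : HasSum (fun n => ((n + 2)! : ℝ)⁻¹ • A ^ (n + 1))
      (((1 - Real.cos θ) / θ ^ 2) • A + ((θ - Real.sin θ) / θ ^ 3) • A ^ 2) :=
    HasSum.even_add_odd hodd heven
  have h := (hasSum_nat_add_iff (f := fun n => ((n + 1)! : ℝ)⁻¹ • A ^ n) 1).mp htail
  rwa [Finset.sum_range_one, zero_add, Nat.factorial_one, Nat.cast_one, inv_one, pow_zero,
    one_smul, add_comm, ← add_assoc] at h

theorem hasSum_inv_factorial_succ_smul_pow_succ {𝔸 : Type*} [NormedRing 𝔸] [NormedAlgebra ℝ 𝔸]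
    [CompleteSpace 𝔸] (x : 𝔸) :
    HasSum (fun n : ℕ => ((n + 1)! : ℝ)⁻¹ • x ^ (n + 1)) (NormedSpace.exp x - 1) := by
  have h := (hasSum_nat_add_iff' 1).mpr (NormedSpace.exp_series_hasSum_exp' (𝕂 := ℝ) x)
  rwa [Finset.sum_range_one, Nat.factorial_zero, Nat.cast_one, inv_one, pow_zero,
    one_smul] at h

theorem enorm3_sq (ω : V3) : enorm3 ω ^ 2 = ω 0 ^ 2 + ω 1 ^ 2 + ω 2 ^ 2 :=
  Real.sq_sqrt (by positivity)

theorem enorm3_ne_zero {ω : V3} (hω : ω ≠ 0) : enorm3 ω ≠ 0 := by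
  intro h
  have hsq := enorm3_sq ω
  rw [h] at hsq
  apply hω
  funext i
  fin_cases i <;> simp <;> nlinarith [sq_nonneg (ω 0), sq_nonneg (ω 1), sq_nonneg (ω 2)]

theorem skew_pow_three (ω : V3) : skew ω ^ 3 = (-enorm3 ω ^ 2) • skew ω := by
  rw [enorm3_sq]
  ext i j
  fin_cases i <;> fin_cases j <;>
    simp [skew, pow_succ, Matrix.mul_apply, Fin.sum_univ_three] <;> ring

theorem hasSum_inv_factorial_succ_smul_skew_pow {ω : V3} (hω : ω ≠ 0) :
    HasSum (fun n : ℕ => ((n + 1)! : ℝ)⁻¹ • skew ω ^ n) (Nmat ω) := by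
  rw [Nmat, ← sq]
  exact hasSum_inv_factorial_succ_smul_pow_of_pow_three (enorm3_ne_zero hω) (skew_pow_three ω)

theorem blk_zero_mul (A B : M3) (a b c d : V3) :
    blk A a b 0 0 * blk B c d 0 0 = blk (A * B) (A *ᵥ c) (A *ᵥ d) 0 0 := by
  ext i j
  fin_cases i <;> fin_cases j <;>
    simp [blk, Matrix.mul_apply, Matrix.mulVec, dotProduct, Fin.sum_univ_five,
      Fin.sum_univ_three]

theorem blk_zero_pow_succ (A : M3) (a b : V3) (n : ℕ) :
    blk A a b 0 0 ^ (n + 1) = blk (A ^ (n + 1)) (A ^ n *ᵥ a) (A ^ n *ᵥ b) 0 0 := by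
  induction n with
  | zero => simp
  | succ n ih =>
    rw [pow_succ', ih, blk_zero_mul, ← pow_succ', mulVec_mulVec, mulVec_mulVec, ← pow_succ']

def blkLinearMap : M3 × V3 × V3 →ₗ[ℝ] M5 where
  toFun p := blk p.1 p.2.1 p.2.2 0 0
  map_add' p q := by ext i j; fin_cases i <;> fin_cases j <;> simp [blk]
  map_smul' r p := by ext i j; fin_cases i <;> fin_cases j <;> simp [blk]

theorem blk_sub_one_add_one (E : M3) (a b : V3) : blk (E - 1) a b 0 0 + 1 = se23 E a b := by
  ext i j
  fin_cases i <;> fin_cases j <;> simp [blk, se23]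

theorem exp_blk_zero_of_hasSum {A N : M3}
    (hN : HasSum (fun n : ℕ => ((n + 1)! : ℝ)⁻¹ • A ^ n) N) (a b : V3) :
    NormedSpace.exp (blk A a b 0 0) = se23 (NormedSpace.exp A) (N *ᵥ a) (N *ᵥ b) := by
  have hE : HasSum (fun n : ℕ => ((n + 1)! : ℝ)⁻¹ • A ^ (n + 1)) (NormedSpace.exp A - 1) := by
    -- any algebra norm induces the product topology on `M3`
    let := Matrix.linftyOpNormedRing (n := Fin 3) (α := ℝ)
    let := Matrix.linftyOpNormedAlgebra (n := Fin 3) (R := ℝ) (α := ℝ)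
    exact hasSum_inv_factorial_succ_smul_pow_succ A
  have hmulVec (u : V3) : HasSum (fun n : ℕ => ((n + 1)! : ℝ)⁻¹ • (A ^ n *ᵥ u)) (N *ᵥ u) :=
    (hN.map (mulVec.addMonoidHomLeft u) (continuous_id.matrix_mulVec continuous_const)).congr_fun
      fun n => by simp [mulVec.addMonoidHomLeft, smul_mulVec]
  have hblk := (hE.prodMk ((hmulVec a).prodMk (hmulVec b))).map blkLinearMap
    (LinearMap.continuous_of_finiteDimensional _)
  have hshift : HasSum (fun n : ℕ => ((n + 1)! : ℝ)⁻¹ • blk A a b 0 0 ^ (n + 1))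
      (blk (NormedSpace.exp A - 1) (N *ᵥ a) (N *ᵥ b) 0 0) :=
    hblk.congr_fun fun n => by
      rw [blk_zero_pow_succ]
      exact (blkLinearMap.map_smul _ (A ^ (n + 1), A ^ n *ᵥ a, A ^ n *ᵥ b)).symm
  have hsum := (hasSum_nat_add_iff (f := fun n : ℕ => (n ! : ℝ)⁻¹ • blk A a b 0 0 ^ n) 1).mp
    hshift
  rw [Finset.sum_range_one, Nat.factorial_zero, Nat.cast_one, inv_one, pow_zero, one_smul,
    blk_sub_one_add_one] at hsum
  rw [NormedSpace.exp_eq_tsum ℝ]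
  exact hsum.tsum_eq

/-- closed form of the exponential map of `SE₂(3)`. -/
theorem stmt_0 (ω v x : V3) (hω : ω ≠ 0) :
    NormedSpace.exp (hat ω v x)
      = se23 (NormedSpace.exp (skew ω)) (Nmat ω *ᵥ v) (Nmat ω *ᵥ x) :=
  exp_blk_zero_of_hasSum (hasSum_inv_factorial_succ_smul_skew_pow hω) v x
end
end

section
/- Let T = [[R, V, X],[0₁ₓ₃, 1, 0],[0₁ₓ₃, 0, 1]] ∈ SE₂(3) and ξ ∈ ℝ⁹. Then T exp_m(ξ^∧) T⁻¹ = exp_m((Ad_T ξ)^∧), where Ad_T is the 9×9 block matrix [[R, 0₃, 0₃],[(V)ₓR, R, 0₃],[(X)ₓR, 0₃, R]] acting on ξ = (ω, v, x). -/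
open Matrix

noncomputable section

lemma blk_mul (A A' : M3) (v x v' x' : V3) (d e d' e' : ℝ) :
    blk A v x d e * blk A' v' x' d' e'
      = blk (A * A') (A *ᵥ v' + d' • v) (A *ᵥ x' + e' • x) (d * d') (e * e') := by
  ext i j
  fin_cases i <;> fin_cases j <;>
    simp [blk, mul_apply, mulVec, dotProduct, Fin.sum_univ_five, Fin.sum_univ_three,
      vecHead, vecTail] <;> ring

lemma skew_aux (A : M3) (w : V3) :
    Aᵀ * skew (A *ᵥ w) * A = A.det • skew w := by
  ext i j
  fin_cases i <;> fin_cases j <;>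
    simp [skew, mul_apply, mulVec, dotProduct, Matrix.det_fin_three, Fin.sum_univ_three,
      transpose_apply] <;> ring

lemma skew_anti (a b : V3) : skew a *ᵥ b = -(skew b *ᵥ a) := by
  ext i
  fin_cases i <;> simp [skew, mulVec, dotProduct, Fin.sum_univ_three, vecHead, vecTail] <;> ring

lemma skew_so3 {R : M3} (hR : IsSO3 R) (w : V3) :
    skew (R *ᵥ w) = R * skew w * Rᵀ := by
  have h2 : R * Rᵀ = 1 := mul_eq_one_comm.mp hR.1
  have h := skew_aux R w
  rw [hR.2, one_smul] at h
  calc skew (R *ᵥ w) = (R * Rᵀ) * skew (R *ᵥ w) * (R * Rᵀ) := by rw [h2]; simp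
    _ = R * (Rᵀ * skew (R *ᵥ w) * R) * Rᵀ := by noncomm_ring
    _ = R * skew w * Rᵀ := by rw [h]

lemma blk_one : blk 1 0 0 1 1 = (1 : M5) := by
  ext i j
  fin_cases i <;> fin_cases j <;> simp [blk, Matrix.one_apply, vecHead, vecTail]

lemma se23_mul_inv {R : M3} (hR : IsSO3 R) (V X : V3) :
    se23 R V X * se23 Rᵀ (-(Rᵀ *ᵥ V)) (-(Rᵀ *ᵥ X)) = 1 := by
  have h2 : R * Rᵀ = 1 := mul_eq_one_comm.mp hR.1
  have hv : ∀ u : V3, R *ᵥ (-(Rᵀ *ᵥ u)) + (1:ℝ) • u = 0 := by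
    intro u
    rw [mulVec_neg, mulVec_mulVec, h2, one_mulVec, one_smul, neg_add_cancel]
  rw [se23, se23, blk_mul, h2, hv, hv, mul_one, blk_one]

/-- `T exp_m(ξ^∧) T⁻¹ = exp_m((Ad_T ξ)^∧)` on `SE₂(3)`. -/
theorem stmt_2 (R : M3) (V X : V3) (hR : IsSO3 R) (ω v x : V3) :
    se23 R V X * NormedSpace.exp (hat ω v x) * (se23 R V X)⁻¹
      = NormedSpace.exp
          (hat (R *ᵥ ω) ((skew V * R) *ᵥ ω + R *ᵥ v) ((skew X * R) *ᵥ ω + R *ᵥ x)) := by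
  classical
  set Ti : M5 := se23 Rᵀ (-(Rᵀ *ᵥ V)) (-(Rᵀ *ᵥ X)) with hTi
  have hmul : se23 R V X * Ti = 1 := se23_mul_inv hR V X
  have hmul' : Ti * se23 R V X = 1 := mul_eq_one_comm.mp hmul
  have hinv : (se23 R V X)⁻¹ = Ti := Matrix.inv_eq_right_inv hmul
  set U : M5ˣ := ⟨se23 R V X, Ti, hmul, hmul'⟩ with hU
  have key : se23 R V X * hat ω v x * Ti
      = hat (R *ᵥ ω) ((skew V * R) *ᵥ ω + R *ᵥ v) ((skew X * R) *ᵥ ω + R *ᵥ x) := by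
    rw [hat, hTi, se23, se23, blk_mul, blk_mul]
    have hrw : ∀ u u' : V3,
        (R * skew ω) *ᵥ (-(Rᵀ *ᵥ u)) + (1:ℝ) • (R *ᵥ u' + (0:ℝ) • u)
          = (skew u * R) *ᵥ ω + R *ᵥ u' := by
      intro u u'
      have h1 : (R * skew ω) *ᵥ (-(Rᵀ *ᵥ u)) = -(skew (R *ᵥ ω) *ᵥ u) := by
        rw [mulVec_neg, mulVec_mulVec, ← skew_so3 hR]
      rw [h1, skew_anti (R *ᵥ ω) u, neg_neg, mulVec_mulVec, one_smul, zero_smul, add_zero,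
        add_comm]
    rw [hrw, hrw, ← skew_so3 hR, hat]
    norm_num
  have hUc : (↑U : M5) = se23 R V X := rfl
  have hUi : (↑U⁻¹ : M5) = Ti := rfl
  calc se23 R V X * NormedSpace.exp (hat ω v x) * (se23 R V X)⁻¹
      = ↑U * NormedSpace.exp (hat ω v x) * ↑U⁻¹ := by rw [hUc, hUi, hinv]
    _ = NormedSpace.exp (↑U * hat ω v x * ↑U⁻¹) := (Matrix.exp_units_conj U _).symm
    _ = _ := by rw [hUc, hUi, key]
end
end

section
/- Let g ∈ ℝ³ and ω, a : ℝ → ℝ³. Let R : ℝ → ℝ³ˣ³ and V, X : ℝ → ℝ³ be differentiable, and define T_t ∈ ℝ⁵ˣ⁵ by T_t = [[R_t, V_t, X_t],[0₁ₓ₃, 1, 0],[0₁ₓ₃, 0, 1]]. Then (dR_t/dt = R_t(ω_t)ₓ, dV_t/dt = g + R_t a_t, dX_t/dt = V_t) holds for all t if and only if dT_t/dt = W T_t + f(T_t) + T_t U_t for all t, where W = [[0₃, g, 0₃ₓ₁],[0₂ₓ₃, 0₂ₓ₁, 0₂ₓ₁]], U_t = [[(ω_t)ₓ, a_t, 0₃ₓ₁],[0₂ₓ₃,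 0₂ₓ₁, 0₂ₓ₁]], and f(T_t) = [[0₃, 0₃ₓ₁, V_t],[0₂ₓ₃, 0₂ₓ₁, 0₂ₓ₁]]. -/
open Matrix

noncomputable section

attribute [local instance] Matrix.normedAddCommGroup Matrix.normedSpace

lemma hasDerivAt_matrix {n m : ℕ} {f : ℝ → Matrix (Fin n) (Fin m) ℝ}
    {f' : Matrix (Fin n) (Fin m) ℝ} {t : ℝ} :
    HasDerivAt f f' t ↔ ∀ i j, HasDerivAt (fun s => f s i j) (f' i j) t :=
  ⟨fun h i j => (hasDerivAt_pi.mp ((hasDerivAt_pi.mp h) i)) j,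
   fun h => hasDerivAt_pi.mpr fun i => hasDerivAt_pi.mpr fun j => h i j⟩

lemma Vof_se23 (R : M3) (V X : V3) : Vof (se23 R V X) = V := by
  funext i; fin_cases i <;> rfl

set_option maxHeartbeats 2000000 in
lemma key_eq (R : M3) (V X ω a g : V3) :
    blk 0 g 0 0 0 * se23 R V X + fmap (se23 R V X) + se23 R V X * blk (skew ω) a 0 0 0
    = blk (R * skew ω) (g + R *ᵥ a) V 0 0 := by
  rw [fmap, Vof_se23]
  ext i j
  fin_cases i <;> fin_cases j <;>
    simp [Matrix.mul_apply, Fin.sum_univ_five, blk, se23, skew, Matrix.mulVec,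
      dotProduct, Fin.sum_univ_three, vecHead, vecTail] <;> ring

set_option maxHeartbeats 2000000 in
/-- flat-Earth IMU equations are equivalent to the matrix equation
`dT/dt = W T + f(T) + T U` on `SE₂(3)`. -/
theorem stmt_3 (g : V3) (ω a : ℝ → V3) (R : ℝ → M3) (V X : ℝ → V3)
    (hR : Differentiable ℝ R) (hV : Differentiable ℝ V) (hX : Differentiable ℝ X) :
    (∀ t, HasDerivAt R (R t * skew (ω t)) t ∧
          HasDerivAt V (g + R t *ᵥ a t) t ∧
          HasDerivAt X (V t) t)
    ↔ (∀ t, HasDerivAt (fun s => se23 (R s) (V s) (X s))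
          (blk 0 g 0 0 0 * se23 (R t) (V t) (X t)
            + fmap (se23 (R t) (V t) (X t))
            + se23 (R t) (V t) (X t) * blk (skew (ω t)) (a t) 0 0 0) t) := by
  constructor
  · intro h t
    rw [key_eq]
    have hR' : ∀ i j, HasDerivAt (fun s => R s i j) ((R t * skew (ω t)) i j) t :=
      hasDerivAt_matrix.mp (h t).1
    have hV' : ∀ i, HasDerivAt (fun s => V s i) ((g + R t *ᵥ a t) i) t :=
      hasDerivAt_pi.mp (h t).2.1
    have hX' : ∀ i, HasDerivAt (fun s => X s i) (V t i) t :=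
      hasDerivAt_pi.mp (h t).2.2
    apply hasDerivAt_matrix.mpr
    intro i j
    fin_cases i <;> fin_cases j <;>
      simp only [se23, blk, Matrix.cons_val', Matrix.cons_val_zero, Matrix.cons_val_one,
        Matrix.head_cons, Matrix.empty_val', Matrix.cons_val_fin_one, Matrix.head_fin_const,
        Matrix.cons_val_two, Matrix.cons_val_three, Matrix.cons_val_four, Matrix.tail_cons,
        Matrix.of_apply, Fin.isValue] <;>
      first
        | exact hR' _ _
        | simpa using hV' _
        | simpa using hX' _
        | exact hasDerivAt_const _ _
  · intro h t
    have h0 := h t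
    rw [key_eq] at h0
    have h' := hasDerivAt_matrix.mp h0
    refine ⟨?_, ?_, ?_⟩
    · apply hasDerivAt_matrix.mpr
      intro i j
      have := h' (Fin.castLE (by omega) i) (Fin.castLE (by omega) j)
      fin_cases i <;> fin_cases j <;> simpa [se23, blk] using this
    · apply hasDerivAt_pi.mpr
      intro i
      have := h' (Fin.castLE (by omega) i) 3
      fin_cases i <;> simpa [se23, blk] using this
    · apply hasDerivAt_pi.mpr
      intro i
      have := h' (Fin.castLE (by omega) i) 4
      fin_cases i <;> simpa [se23, blk] using this
end
end

section
/- Define f on 5×5 real matrices by f([[R, V, X],[0₁ₓ₃, 1, 0],[0₁ₓ₃, 0, 1]]) = [[0₃, 0₃ₓ₁, V],[0₂ₓ₃, 0₂ₓ₁, 0₂ₓ₁]], i.e. f(T) places the velocity column V of T in the position column and is zero elsewhere. Then for all T, T̃ ∈ SE₂(3), f(T T̃) = f(T) T̃ + T f(T̃). -/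
open Matrix

noncomputable section

lemma castLE0 (h : 3 ≤ 5) : (Fin.castLE h 0 : Fin 5) = 0 := rfl
lemma castLE1 (h : 3 ≤ 5) : (Fin.castLE h 1 : Fin 5) = 1 := rfl
lemma castLE2 (h : 3 ≤ 5) : (Fin.castLE h 2 : Fin 5) = 2 := rfl

set_option maxHeartbeats 2000000 in
/-- the map `f` placing the velocity column in the position column
satisfies `f(T T̃) = f(T) T̃ + T f(T̃)` on `SE₂(3)`. -/
theorem stmt_5 : ∀ T T' : M5, IsSE23 T → IsSE23 T' →
    fmap (T * T') = fmap T * T' + T * fmap T' := by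
  rintro T T' ⟨R, V, X, hR, rfl⟩ ⟨R', V', X', hR', rfl⟩
  ext i j
  fin_cases i <;> fin_cases j <;>
    simp [fmap, se23, blk, Vof, Matrix.mul_apply, Fin.sum_univ_five, castLE0, castLE1, castLE2, Matrix.vecHead, Matrix.vecTail] <;> ring
end
end

section
/- Let g ∈ ℝ³, let ω, a : ℝ → ℝ³, and let R^υ : ℝ → ℝ³ˣ³, V^υ, X^υ : ℝ → ℝ³ be differentiable with R^υ_0 = I₃, V^υ_0 = 0, X^υ_0 = 0, dR^υ_t/dt = R^υ_t (ω_t)ₓ, dV^υ_t/dt = R^υ_t a_t, dX^υ_t/dt = V^υ_t. Fix R₀ ∈ SO(3) and V₀, X₀ ∈ ℝ³, and define R_t = R₀ R^υ_t, V_t = V₀ + t g + R₀ V^υ_t, X_t = X₀ + t V₀ + (t²/2) g + R₀ X^υ_t. Then (R_t, V_t, X_t) satisfies the inertial navigation equations dR_t/dt = R_t(ω_t)ₓ, dV_t/dt = g + R_t a_t, dX_t/dt = V_t, with initial condition (R₀, V₀, X₀). -/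
open Matrix

noncomputable section

attribute [local instance] Matrix.normedAddCommGroup Matrix.normedSpace

/-! Left multiplication by the constant `R₀` is linear, so it commutes with `d/dt`; the gravity
terms `t • g` and `(t ^ 2 / 2) • g` contribute `g` and `t • g`. Hence the preintegrated equations
for `(Rυ, Vυ, Xυ)` become the navigation equations for `(Rt, Vt, Xt)`. -/

section Calculus

variable {𝕜 E F : Type*} [NontriviallyNormedField 𝕜] [CompleteSpace 𝕜]
  [NormedAddCommGroup E] [NormedSpace 𝕜 E] [FiniteDimensional 𝕜 E]
  [NormedAddCommGroup F] [NormedSpace 𝕜 F]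

theorem HasDerivAt.linearMap_comp (L : E →ₗ[𝕜] F) {f : 𝕜 → E} {f' : E} {t : 𝕜}
    (hf : HasDerivAt f f' t) : HasDerivAt (fun s => L (f s)) (L f') t :=
  L.toContinuousLinearMap.hasFDerivAt.comp_hasDerivAt t hf

theorem HasDerivAt.matrix_const_mul {n : Type*} [Fintype n] [DecidableEq n]
    (A : Matrix n n 𝕜) {F : 𝕜 → Matrix n n 𝕜} {F' : Matrix n n 𝕜} {t : 𝕜}
    (hF : HasDerivAt F F' t) : HasDerivAt (fun s => A * F s) (A * F') t :=
  hF.linearMap_comp (LinearMap.mulLeft 𝕜 A)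

theorem HasDerivAt.matrix_const_mulVec {m n : Type*} [Fintype m] [Fintype n]
    (A : Matrix m n 𝕜) {f : 𝕜 → n → 𝕜} {f' : n → 𝕜} {t : 𝕜}
    (hf : HasDerivAt f f' t) : HasDerivAt (fun s => A *ᵥ f s) (A *ᵥ f') t :=
  hf.linearMap_comp (Matrix.mulVecLin A)

end Calculus

theorem hasDerivAt_smul_const_self {E : Type*} [NormedAddCommGroup E] [NormedSpace ℝ E]
    (v : E) (t : ℝ) : HasDerivAt (fun s : ℝ => s • v) v t := by
  simpa using (hasDerivAt_id t).smul_const v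

theorem hasDerivAt_sq_div_two_smul {E : Type*} [NormedAddCommGroup E] [NormedSpace ℝ E]
    (v : E) (t : ℝ) : HasDerivAt (fun s : ℝ => (s ^ 2 / 2) • v) (t • v) t := by
  convert ((hasDerivAt_pow 2 t).div_const 2).smul_const v using 2
  ring

theorem stmt_6_general (g : V3) (ω a : ℝ → V3)
    (Rυ : ℝ → M3) (Vυ Xυ : ℝ → V3)
    (hR0 : Rυ 0 = 1) (hV0 : Vυ 0 = 0) (hX0 : Xυ 0 = 0)
    (hRd : ∀ t, HasDerivAt Rυ (Rυ t * skew (ω t)) t)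
    (hVd : ∀ t, HasDerivAt Vυ (Rυ t *ᵥ a t) t)
    (hXd : ∀ t, HasDerivAt Xυ (Vυ t) t)
    (R₀ : M3) (V₀ X₀ : V3) :
    let Rt : ℝ → M3 := fun t => R₀ * Rυ t
    let Vt : ℝ → V3 := fun t => V₀ + t • g + R₀ *ᵥ Vυ t
    let Xt : ℝ → V3 := fun t => X₀ + t • V₀ + (t ^ 2 / 2) • g + R₀ *ᵥ Xυ t
    Rt 0 = R₀ ∧ Vt 0 = V₀ ∧ Xt 0 = X₀ ∧
      ∀ t, HasDerivAt Rt (Rt t * skew (ω t)) t ∧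
           HasDerivAt Vt (g + Rt t *ᵥ a t) t ∧
           HasDerivAt Xt (Vt t) t := by
  intro Rt Vt Xt
  refine ⟨by simp [Rt, hR0], by simp [Vt, hV0], by simp [Xt, hX0], fun t => ⟨?_, ?_, ?_⟩⟩
  · simpa only [Rt, Matrix.mul_assoc] using (hRd t).matrix_const_mul R₀
  · refine (((hasDerivAt_const t V₀).add (hasDerivAt_smul_const_self g t)).add
      ((hVd t).matrix_const_mulVec R₀)).congr_deriv ?_
    simp [Rt, Matrix.mulVec_mulVec]
  · refine ((((hasDerivAt_const t X₀).add (hasDerivAt_smul_const_self V₀ t)).add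
      (hasDerivAt_sq_div_two_smul g t)).add ((hXd t).matrix_const_mulVec R₀)).congr_deriv ?_
    simp [Vt]

/-- the preintegration formulas reconstruct the solution of the
flat-Earth inertial navigation equations from any initial condition. -/
theorem stmt_6 (g : V3) (ω a : ℝ → V3)
    (Rυ : ℝ → M3) (Vυ Xυ : ℝ → V3)
    (hR0 : Rυ 0 = 1) (hV0 : Vυ 0 = 0) (hX0 : Xυ 0 = 0)
    (hRd : ∀ t, HasDerivAt Rυ (Rυ t * skew (ω t)) t)
    (hVd : ∀ t, HasDerivAt Vυ (Rυ t *ᵥ a t) t)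
    (hXd : ∀ t, HasDerivAt Xυ (Vυ t) t)
    (R₀ : M3) (hR₀ : IsSO3 R₀) (V₀ X₀ : V3) :
    let Rt : ℝ → M3 := fun t => R₀ * Rυ t
    let Vt : ℝ → V3 := fun t => V₀ + t • g + R₀ *ᵥ Vυ t
    let Xt : ℝ → V3 := fun t => X₀ + t • V₀ + (t ^ 2 / 2) • g + R₀ *ᵥ Xυ t
    Rt 0 = R₀ ∧ Vt 0 = V₀ ∧ Xt 0 = X₀ ∧
      ∀ t, HasDerivAt Rt (Rt t * skew (ω t)) t ∧
           HasDerivAt Vt (g + Rt t *ᵥ a t) t ∧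
           HasDerivAt Xt (Vt t) t :=
  stmt_6_general g ω a Rυ Vυ Xυ hR0 hV0 hX0 hRd hVd hXd R₀ V₀ X₀
end
end

section
/- (Preintegration with Coriolis effect.) Let Ω, g ∈ ℝ³ and ω, a : ℝ → ℝ³. Let R^υ : ℝ → ℝ³ˣ³, V^υ, X^υ : ℝ → ℝ³ be differentiable with R^υ_0 = I₃, V^υ_0 = 0, X^υ_0 = 0, dR^υ_t/dt = R^υ_t(ω_t)ₓ, dV^υ_t/dt = R^υ_t a_t, dX^υ_t/dt = V^υ_t. Let Γ^R : ℝ → ℝ³ˣ³ and Γ^v, Γ^x : ℝ → ℝ³ be differentiable with Γ^R_0 = I₃, Γ^v_0 = 0, Γ^x_0 = 0, dΓ^R_t/dt = −Ωₓ Γ^R_t, dΓ^v_t/dt = g − Ωₓ Γ^v_t, dΓ^x_t/dt = Γ^v_t − Ωₓ Γ^x_t. Fix R₀ ∈ SO(3), V₀, X₀ ∈ ℝ³ and set V₀' = V₀ + Ωₓ X₀. Define R_t = Γ^R_t R₀ R^υ_t, X_t = Γ^x_t + Γ^R_t R₀ X^υ_t + t Γ^R_t V₀' + Γ^R_t X₀,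 and V_t = Γ^v_t + Γ^R_t R₀ V^υ_t + Γ^R_t V₀' − Ωₓ X_t. Then (R_t, V_t, X_t) satisfies exactly the rotating-Earth navigation equations dR_t/dt = −Ωₓ R_t + R_t(ω_t)ₓ, dV_t/dt = g + R_t a_t − 2Ωₓ V_t − Ωₓ² X_t, dX_t/dt = V_t, with initial condition (R₀, V₀, X₀). -/
open Matrix

noncomputable section

attribute [local instance] Matrix.normedAddCommGroup Matrix.normedSpace

/-!
Since `Γ^R` solves `Γ' = -Ωₓ Γ`, the product rule gives `(Γ^R w)' = Γ^R w' - Ωₓ Γ^R w` for any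
curve `w`. Writing `X_t = Γ^x_t + Γ^R_t (R₀ X^υ_t + t V₀' + X₀)` and
`V_t + Ωₓ X_t = Γ^v_t + Γ^R_t (R₀ V^υ_t + V₀')`, this yields `X' = V` directly, and
differentiating `V = (V + Ωₓ X) - Ωₓ X` produces the Coriolis term `-2 Ωₓ V` and the centrifugal
term `-Ωₓ² X`.
-/

section MatrixDeriv

variable {𝕜 E F G : Type*} [NontriviallyNormedField 𝕜] [CompleteSpace 𝕜]
  [NormedAddCommGroup E] [NormedSpace 𝕜 E] [FiniteDimensional 𝕜 E]
  [NormedAddCommGroup F] [NormedSpace 𝕜 F] [FiniteDimensional 𝕜 F]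
  [NormedAddCommGroup G] [NormedSpace 𝕜 G]

theorem LinearMap.hasDerivAt_of_bilinear (B : E →ₗ[𝕜] F →ₗ[𝕜] G) {u : 𝕜 → E} {v : 𝕜 → F}
    {u' : E} {v' : F} {x : 𝕜} (hu : HasDerivAt u u' x) (hv : HasDerivAt v v' x) :
    HasDerivAt (fun y => B (u y) (v y)) (B (u x) v' + B u' (v x)) x :=
  (LinearMap.toContinuousLinearMap
    (LinearMap.toContinuousLinearMap.toLinearMap ∘ₗ B)).hasDerivAt_of_bilinear
    (fun _ => hu) (fun _ => hv)

variable {l m n : Type*} [Fintype l] [Fintype m] [Fintype n] {x : 𝕜}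

theorem HasDerivAt.matrix_mul {A : 𝕜 → Matrix l m 𝕜} {B : 𝕜 → Matrix m n 𝕜}
    {A' : Matrix l m 𝕜} {B' : Matrix m n 𝕜} (hA : HasDerivAt A A' x) (hB : HasDerivAt B B' x) :
    HasDerivAt (fun y => A y * B y) (A' * B x + A x * B') x := by
  rw [add_comm]
  exact (mulLinearMap 𝕜 : Matrix l m 𝕜 →ₗ[𝕜] _).hasDerivAt_of_bilinear hA hB

theorem HasDerivAt.matrix_mulVec {A : 𝕜 → Matrix m n 𝕜} {v : 𝕜 → n → 𝕜}
    {A' : Matrix m n 𝕜} {v' : n → 𝕜} (hA : HasDerivAt A A' x) (hv : HasDerivAt v v' x) :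
    HasDerivAt (fun y => A y *ᵥ v y) (A' *ᵥ v x + A x *ᵥ v') x := by
  rw [add_comm]
  exact (Matrix.mulVecBilin 𝕜 𝕜 : Matrix m n 𝕜 →ₗ[𝕜] _).hasDerivAt_of_bilinear hA hv

theorem hasDerivAt_add_mulVec_of_rotatingFrame {K : Matrix n n 𝕜} {γ : 𝕜 → n → 𝕜}
    {Γ : 𝕜 → Matrix n n 𝕜} {w : 𝕜 → n → 𝕜} {f w' : n → 𝕜}
    (hγ : HasDerivAt γ (f - K *ᵥ γ x) x) (hΓ : HasDerivAt Γ (-K * Γ x) x)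
    (hw : HasDerivAt w w' x) :
    HasDerivAt (fun y => γ y + Γ y *ᵥ w y) (f + Γ x *ᵥ w' - K *ᵥ (γ x + Γ x *ᵥ w x)) x := by
  refine (hγ.add (hΓ.matrix_mulVec hw)).congr_deriv ?_
  simp only [Matrix.neg_mul, Matrix.neg_mulVec, ← Matrix.mulVec_mulVec, Matrix.mulVec_add]
  abel

end MatrixDeriv

theorem stmt_9_general (Ω g : V3) (ω a : ℝ → V3)
    (Rυ : ℝ → M3) (Vυ Xυ : ℝ → V3)
    (hRυ0 : Rυ 0 = 1) (hVυ0 : Vυ 0 = 0) (hXυ0 : Xυ 0 = 0)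
    (hRυ : ∀ t, HasDerivAt Rυ (Rυ t * skew (ω t)) t)
    (hVυ : ∀ t, HasDerivAt Vυ (Rυ t *ᵥ a t) t)
    (hXυ : ∀ t, HasDerivAt Xυ (Vυ t) t)
    (ΓR : ℝ → M3) (Γv Γx : ℝ → V3)
    (hΓR0 : ΓR 0 = 1) (hΓv0 : Γv 0 = 0) (hΓx0 : Γx 0 = 0)
    (hΓR : ∀ t, HasDerivAt ΓR (-(skew Ω) * ΓR t) t)
    (hΓv : ∀ t, HasDerivAt Γv (g - skew Ω *ᵥ Γv t) t)
    (hΓx : ∀ t, HasDerivAt Γx (Γv t - skew Ω *ᵥ Γx t) t)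
    (R₀ : M3) (V₀ X₀ : V3) :
    let V₀' : V3 := V₀ + skew Ω *ᵥ X₀
    let Rt : ℝ → M3 := fun t => ΓR t * R₀ * Rυ t
    let Xt : ℝ → V3 := fun t =>
      Γx t + (ΓR t * R₀) *ᵥ Xυ t + t • (ΓR t *ᵥ V₀') + ΓR t *ᵥ X₀
    let Vt : ℝ → V3 := fun t =>
      Γv t + (ΓR t * R₀) *ᵥ Vυ t + ΓR t *ᵥ V₀' - skew Ω *ᵥ Xt t
    Rt 0 = R₀ ∧ Vt 0 = V₀ ∧ Xt 0 = X₀ ∧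
      ∀ t, HasDerivAt Rt (-(skew Ω) * Rt t + Rt t * skew (ω t)) t ∧
           HasDerivAt Vt (g + Rt t *ᵥ a t - (2 : ℝ) • (skew Ω *ᵥ Vt t)
             - (skew Ω * skew Ω) *ᵥ Xt t) t ∧
           HasDerivAt Xt (Vt t) t := by
  intro V₀' Rt Xt Vt
  have hRt : Rt = fun t => ΓR t * (R₀ * Rυ t) := funext fun t => Matrix.mul_assoc _ _ _
  have hXt : Xt = fun t => Γx t + ΓR t *ᵥ (R₀ *ᵥ Xυ t + t • V₀' + X₀) := by
    funext t
    simp only [Xt, Matrix.mulVec_add, Matrix.mulVec_smul, Matrix.mulVec_mulVec, add_assoc]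
  have hVt : Vt = fun t => Γv t + ΓR t *ᵥ (R₀ *ᵥ Vυ t + V₀') - skew Ω *ᵥ Xt t := by
    funext t
    simp only [Vt, Matrix.mulVec_add, Matrix.mulVec_mulVec, add_assoc]
  have dXt : ∀ t, HasDerivAt Xt (Vt t) t := fun t => by
    have hw : HasDerivAt (fun s => R₀ *ᵥ Xυ s + s • V₀' + X₀) (R₀ *ᵥ Vυ t + V₀') t := by
      simpa using (((hasDerivAt_const t R₀).matrix_mulVec (hXυ t)).add
        ((hasDerivAt_id t).smul_const V₀')).add_const X₀
    rw [hVt, hXt]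
    exact hasDerivAt_add_mulVec_of_rotatingFrame (hΓx t) (hΓR t) hw
  refine ⟨?_, ?_, ?_, fun t => ⟨?_, ?_, dXt t⟩⟩
  · simp [Rt, hΓR0, hRυ0]
  · simp [Vt, Xt, V₀', hΓv0, hVυ0, hΓx0, hXυ0, hΓR0]
  · simp [Xt, hΓx0, hXυ0, hΓR0]
  · rw [hRt]
    refine ((hΓR t).matrix_mul ((hasDerivAt_const t R₀).matrix_mul (hRυ t))).congr_deriv ?_
    simp [Matrix.mul_assoc]
  · have hz : HasDerivAt (fun s => R₀ *ᵥ Vυ s + V₀') (R₀ *ᵥ (Rυ t *ᵥ a t)) t := by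
      simpa using ((hasDerivAt_const t R₀).matrix_mulVec (hVυ t)).add_const V₀'
    have hU := hasDerivAt_add_mulVec_of_rotatingFrame (hΓv t) (hΓR t) hz
    rw [hVt]
    refine (hU.sub ((hasDerivAt_const t (skew Ω)).matrix_mulVec (dXt t))).congr_deriv ?_
    rw [hVt]
    simp only [Rt, Matrix.zero_mulVec, Matrix.mulVec_sub, Matrix.mulVec_mulVec, Matrix.mul_assoc,
      two_smul]
    abel

/-- exact preintegration with Coriolis and centrifugal effects:
the reconstructed `(R, V, X)` solves the rotating-Earth navigation equations with
initial condition `(R₀, V₀, X₀)`. -/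
theorem stmt_9 (Ω g : V3) (ω a : ℝ → V3)
    (Rυ : ℝ → M3) (Vυ Xυ : ℝ → V3)
    (hRυ0 : Rυ 0 = 1) (hVυ0 : Vυ 0 = 0) (hXυ0 : Xυ 0 = 0)
    (hRυ : ∀ t, HasDerivAt Rυ (Rυ t * skew (ω t)) t)
    (hVυ : ∀ t, HasDerivAt Vυ (Rυ t *ᵥ a t) t)
    (hXυ : ∀ t, HasDerivAt Xυ (Vυ t) t)
    (ΓR : ℝ → M3) (Γv Γx : ℝ → V3)
    (hΓR0 : ΓR 0 = 1) (hΓv0 : Γv 0 = 0) (hΓx0 : Γx 0 = 0)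
    (hΓR : ∀ t, HasDerivAt ΓR (-(skew Ω) * ΓR t) t)
    (hΓv : ∀ t, HasDerivAt Γv (g - skew Ω *ᵥ Γv t) t)
    (hΓx : ∀ t, HasDerivAt Γx (Γv t - skew Ω *ᵥ Γx t) t)
    (R₀ : M3) (hR₀ : IsSO3 R₀) (V₀ X₀ : V3) :
    let V₀' : V3 := V₀ + skew Ω *ᵥ X₀
    let Rt : ℝ → M3 := fun t => ΓR t * R₀ * Rυ t
    let Xt : ℝ → V3 := fun t =>
      Γx t + (ΓR t * R₀) *ᵥ Xυ t + t • (ΓR t *ᵥ V₀') + ΓR t *ᵥ X₀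
    let Vt : ℝ → V3 := fun t =>
      Γv t + (ΓR t * R₀) *ᵥ Vυ t + ΓR t *ᵥ V₀' - skew Ω *ᵥ Xt t
    Rt 0 = R₀ ∧ Vt 0 = V₀ ∧ Xt 0 = X₀ ∧
      ∀ t, HasDerivAt Rt (-(skew Ω) * Rt t + Rt t * skew (ω t)) t ∧
           HasDerivAt Vt (g + Rt t *ᵥ a t - (2 : ℝ) • (skew Ω *ᵥ Vt t)
             - (skew Ω * skew Ω) *ᵥ Xt t) t ∧
           HasDerivAt Xt (Vt t) t :=
  stmt_9_general Ω g ω a Rυ Vυ Xυ hRυ0 hVυ0 hXυ0 hRυ hVυ hXυ ΓR Γv Γx hΓR0 hΓv0 hΓx0 hΓR hΓv hΓx R₀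
    V₀ X₀
end
end

section
/- For any t ∈ ℝ, the map Φ_t : SE₂(3) → SE₂(3) defined by Φ_t([[R, V, X],[0₁ₓ₃, 1, 0],[0₁ₓ₃, 0, 1]]) = [[R, V, X + tV],[0₁ₓ₃, 1, 0],[0₁ₓ₃, 0, 1]] is a group automorphism: Φ_t(T₁ T₂) = Φ_t(T₁) Φ_t(T₂) for all T₁, T₂ ∈ SE₂(3). -/
open Matrix

noncomputable section

/-! In block form the product is
`(R₁, V₁, X₁)(R₂, V₂, X₂) = (R₁R₂, R₁V₂ + V₁, R₁X₂ + X₁)`, and `Φ_t` only replaces `X` by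
`X + tV`; both sides of the identity then agree because `R₁` acts linearly. -/

theorem blk_mul_s10 (A₁ A₂ : M3) (v₁ x₁ v₂ x₂ : V3) (d₁ e₁ d₂ e₂ : ℝ) :
    blk A₁ v₁ x₁ d₁ e₁ * blk A₂ v₂ x₂ d₂ e₂ =
      blk (A₁ * A₂) (A₁ *ᵥ v₂ + d₂ • v₁) (A₁ *ᵥ x₂ + e₂ • x₁) (d₁ * d₂) (e₁ * e₂) := by
  ext i j
  fin_cases i <;> fin_cases j <;>
    simp [blk, mul_apply, mulVec, dotProduct, Fin.sum_univ_succ] <;> ring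

theorem se23_mul (R₁ R₂ : M3) (V₁ X₁ V₂ X₂ : V3) :
    se23 R₁ V₁ X₁ * se23 R₂ V₂ X₂ = se23 (R₁ * R₂) (R₁ *ᵥ V₂ + V₁) (R₁ *ᵥ X₂ + X₁) := by
  simp only [se23, blk_mul_s10, one_smul, mul_one]

theorem Phi_blk (t : ℝ) (A : M3) (v x : V3) (d e : ℝ) :
    Phi t (blk A v x d e) = blk A v (x + t • v) d e := by
  ext i j
  fin_cases i <;> fin_cases j <;> simp [Phi, blk]

theorem Phi_se23 (t : ℝ) (R : M3) (V X : V3) :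
    Phi t (se23 R V X) = se23 R V (X + t • V) :=
  Phi_blk t R V X 1 1

/-- `Φ_t` is a group automorphism of `SE₂(3)`. -/
theorem stmt_10 (t : ℝ) (T₁ T₂ : M5) (h₁ : IsSE23 T₁) (h₂ : IsSE23 T₂) :
    Phi t (T₁ * T₂) = Phi t T₁ * Phi t T₂ := by
  obtain ⟨R₁, V₁, X₁, -, rfl⟩ := h₁
  obtain ⟨R₂, V₂, X₂, -, rfl⟩ := h₂
  rw [se23_mul, Phi_se23, Phi_se23, Phi_se23, se23_mul, mulVec_add, mulVec_smul, smul_add]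
  congr 1
  abel
end
end

section
/- Fix Δt ∈ ℝ and let F : ℝ⁹ → ℝ⁹ be the linear map (ω, v, x) ↦ (ω, v, x + Δt·v). Then for every ξ ∈ ℝ⁹, Φ_Δt(exp_m(ξ^∧)) = exp_m((Fξ)^∧), where Φ_Δt([[R, V, X],...]) = [[R, V, X + Δt·V],...]. -/
open Matrix

noncomputable section

lemma exp_row_eq_one (N : M5) (i : Fin 5) (h : N i = 0) :
    NormedSpace.exp N i = (1 : M5) i := by
  letI : SeminormedRing M5 := Matrix.linftyOpSemiNormedRing
  letI : NormedRing M5 := Matrix.linftyOpNormedRing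
  letI : NormedAlgebra ℝ M5 := Matrix.linftyOpNormedAlgebra
  have hrow : ∀ n : ℕ, n ≠ 0 → (N ^ n) i = 0 := by
    intro n hn
    obtain ⟨m, rfl⟩ := Nat.exists_eq_succ_of_ne_zero hn
    rw [pow_succ']
    funext j
    simp [Matrix.mul_apply, h]
  have hs : Summable fun n : ℕ => ((Nat.factorial n : ℝ))⁻¹ • N ^ n :=
    NormedSpace.expSeries_summable' (𝕂 := ℝ) N
  have key := (ContinuousLinearMap.proj (R := ℝ) (φ := fun _ : Fin 5 => Fin 5 → ℝ) i).map_tsum hs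
  rw [NormedSpace.exp_eq_tsum ℝ]
  refine Eq.trans key ?_
  rw [tsum_eq_single 0]
  · simp
    rfl
  · intro n hn
    change (n.factorial : ℝ)⁻¹ • (N ^ n) i = 0
    rw [hrow n hn, smul_zero]

def EE : M5 := Matrix.single 3 4 (1 : ℝ)

lemma mulE_left (A : M5) : EE * A = Matrix.of fun i j => if i = 3 then A 4 j else 0 := by
  ext i j
  simp only [EE, Matrix.mul_apply, Matrix.single, Matrix.of_apply,
    Fin.sum_univ_five]
  fin_cases i <;> simp
lemma mulE_right (A : M5) : A * EE = Matrix.of fun i j => if j = 4 then A i 3 else 0 := by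
  ext i j
  simp only [EE, Matrix.mul_apply, Matrix.single, Matrix.of_apply,
    Fin.sum_univ_five]
  fin_cases j <;> simp

lemma hEE : EE * EE = 0 := by
  rw [mulE_left]
  ext i j
  simp [EE, Matrix.single]

lemma hEN (N : M5) (h : N 4 = 0) : EE * N = 0 := by
  rw [mulE_left]
  ext i j
  simp [h]

lemma hET (T : M5) (h : T 4 = (1 : M5) 4) : EE * T = EE := by
  rw [mulE_left]
  ext i j
  rw [Matrix.of_apply, h]
  fin_cases i <;> fin_cases j <;> simp [EE, Matrix.single, Matrix.one_apply]

lemma hFN (Δt : ℝ) (ξ : V9) :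
    hat9 (Fmap Δt ξ) = hat9 ξ + Δt • (hat9 ξ * EE) := by
  rw [mulE_right]
  ext i j
  fin_cases i <;> fin_cases j <;> simp [hat9, hat, blk, Fmap, Matrix.vecHead, Matrix.vecTail] <;> ring

/-- `Φ_Δt(exp_m(ξ^∧)) = exp_m((Fξ)^∧)` with `F(ω,v,x) = (ω,v,x+Δt·v)`. -/
theorem stmt_11 (Δt : ℝ) (ξ : V9) :
    Phi Δt (NormedSpace.exp (hat9 ξ)) = NormedSpace.exp (hat9 (Fmap Δt ξ)) := by
  set T := NormedSpace.exp (hat9 ξ) with hT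
  have hN4 : hat9 ξ 4 = 0 := by funext j; fin_cases j <;> simp [hat9, hat, blk, Matrix.vecHead, Matrix.vecTail]
  have h3 : T 3 = (1 : M5) 3 :=
    exp_row_eq_one _ _ (by funext j; fin_cases j <;> simp [hat9, hat, blk, Matrix.vecHead, Matrix.vecTail])
  have h4 : T 4 = (1 : M5) 4 := exp_row_eq_one _ _ hN4
  -- conjugation
  have hCD : (1 - Δt • EE) * (1 + Δt • EE) = 1 := by
    have : (Δt • EE) * (Δt • EE) = 0 := by
      rw [Matrix.smul_mul, Matrix.mul_smul, hEE]; simp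
    rw [sub_mul, one_mul, mul_add, mul_one, this, add_zero, add_sub_cancel_right]
  have hDC : (1 + Δt • EE) * (1 - Δt • EE) = 1 := by
    have : (Δt • EE) * (Δt • EE) = 0 := by
      rw [Matrix.smul_mul, Matrix.mul_smul, hEE]; simp
    rw [add_mul, one_mul, mul_sub, mul_one, this, sub_zero, sub_add_cancel]
  have hconj : hat9 (Fmap Δt ξ) = (1 - Δt • EE) * hat9 ξ * (1 + Δt • EE) := by
    rw [hFN]
    have hen : EE * hat9 ξ = 0 := hEN _ hN4
    rw [sub_mul, one_mul, Matrix.smul_mul, hen, smul_zero, sub_zero,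
      mul_add, mul_one, Matrix.mul_smul]
  have hu : NormedSpace.exp (hat9 (Fmap Δt ξ)) = (1 - Δt • EE) * T * (1 + Δt • EE) := by
    rw [hconj]
    exact Matrix.exp_units_conj
      (Units.mk (1 - Δt • EE) (1 + Δt • EE) hCD hDC) (hat9 ξ)
  rw [hu]
  have hET' : EE * T = EE := hET T h4
  have expand : (1 - Δt • EE) * T * (1 + Δt • EE)
      = T + Δt • (T * EE) - Δt • EE - (Δt * Δt) • (EE * EE) := by
    rw [sub_mul, one_mul, Matrix.smul_mul, hET']
    rw [mul_add, mul_one, sub_mul, Matrix.smul_mul, Matrix.mul_smul, Matrix.mul_smul]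
    rw [smul_smul]
    abel
  rw [expand, hEE, smul_zero, sub_zero, mulE_right]
  ext i j
  have e33 : T 3 3 = 1 := by rw [h3]; simp [Matrix.one_apply]
  have e43 : T 4 3 = 0 := by rw [h4]; simp [Matrix.one_apply]
  fin_cases i <;> fin_cases j <;>
    simp [Phi, EE, Matrix.single, e33, e43] <;> (intros; exfalso; omega)
end
end

section
/- (Exact preintegration under accelerometer bias correction.) Let ω, a : ℝ → ℝ³ be continuous and c ∈ ℝ³. Let R : ℝ → ℝ³ˣ³ and V, X : ℝ → ℝ³ be differentiable with R_0 = I₃, V_0 = 0, X_0 = 0, dR_t/dt = R_t(ω_t)ₓ, dV_t/dt = R_t a_t, dX_t/dt = V_t, and let R̂, V̂, X̂ solve the same system with a replaced by a + c (same ω, same zero initial conditions). Then for all t: R̂_t = R_t, V̂_t = V_t + (∫₀ᵗ R_s ds) c, and X̂_t = X_t + (∫₀ᵗ (∫₀ˢ R_u du) ds) c. In particular, in the absence of a gyro bias correction, the preintegrated quantities depend affinely (hence exactly, with no first-order approximation) on the accelerometer bias correction c. -/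
/-! The rotation equation `Ṙ = R (ω)ₓ` does not involve the accelerometer input, and as a linear
ODE with continuous coefficients it has unique solutions, so `R̂ = R`. Then `V̂ - V` and
`(∫₀ᵗ R) c` both have derivative `R_t c` and vanish at `0`, hence agree; integrating once more
gives the same for `X̂ - X` and `(∫₀ᵗ ∫₀ˢ R) c`.

Uniqueness for `ẋ = A(t) x` with `A` continuous: the set where two solutions agree is closed, and
it is open by the local Lipschitz uniqueness theorem, since `‖A‖` is locally bounded. -/
open Matrix

noncomputable section

attribute [local instance] Matrix.normedAddCommGroup Matrix.normedSpace

theorem eq_of_forall_hasDerivAt {E : Type*} [NormedAddCommGroup E] [NormedSpace ℝ E]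
    {f g f' : ℝ → E} (hf : ∀ t, HasDerivAt f (f' t) t) (hg : ∀ t, HasDerivAt g (f' t) t)
    (t₀ : ℝ) (h : f t₀ = g t₀) : f = g :=
  eq_of_fderiv_eq (fun t => (hf t).differentiableAt) (fun t => (hg t).differentiableAt)
    (fun t => by rw [(hf t).hasFDerivAt.fderiv, (hg t).hasFDerivAt.fderiv]) t₀ h

open Set Filter Topology in
theorem ODE_solution_unique_of_linear {E : Type*} [NormedAddCommGroup E] [NormedSpace ℝ E]
    {A : ℝ → E →L[ℝ] E} (hA : Continuous A) {f g : ℝ → E}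
    (hf : ∀ t, HasDerivAt f (A t (f t)) t) (hg : ∀ t, HasDerivAt g (A t (g t)) t)
    (t₀ : ℝ) (h : f t₀ = g t₀) : f = g := by
  have hfc : Continuous f := continuous_iff_continuousAt.2 fun t => (hf t).continuousAt
  have hgc : Continuous g := continuous_iff_continuousAt.2 fun t => (hg t).continuousAt
  have hopen : IsOpen {t | f t = g t} := by
    refine isOpen_iff_mem_nhds.2 fun t (ht : f t = g t) => ?_
    have hbound : ∀ᶠ τ in 𝓝 t, ‖A τ‖₊ < ‖A t‖₊ + 1 :=
      hA.nnnorm.continuousAt.eventually_lt continuousAt_const (lt_add_one _)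
    exact ODE_solution_unique_of_eventually (s := fun _ => univ)
      (hbound.mono fun τ hτ => ((A τ).lipschitz.weaken hτ.le).lipschitzOnWith)
      (Eventually.of_forall fun τ => ⟨hf τ, mem_univ _⟩)
      (Eventually.of_forall fun τ => ⟨hg τ, mem_univ _⟩) ht
  have hS : {t | f t = g t} = univ :=
    IsClopen.eq_univ ⟨isClosed_eq hfc hgc, hopen⟩ ⟨t₀, h⟩
  exact funext fun t => (hS ▸ mem_univ t : t ∈ {t | f t = g t})

theorem continuous_skew : Continuous skew := by
  unfold skew; fun_prop

theorem Matrix.continuous_toContinuousLinearMap_mulRight {n : Type*} [Fintype n]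
    {S : ℝ → Matrix n n ℝ} (hS : Continuous S) :
    Continuous fun t => LinearMap.toContinuousLinearMap (LinearMap.mulRight ℝ (S t)) :=
  ((LinearMap.toContinuousLinearMap.toLinearMap ∘ₗ
    (LinearMap.mul ℝ (Matrix n n ℝ)).flip).continuous_of_finiteDimensional).comp hS

theorem HasDerivAt.mulVec_const {m n : Type*} [Fintype m] [Fintype n] {M : ℝ → Matrix m n ℝ}
    {M' : Matrix m n ℝ} {t : ℝ} (hM : HasDerivAt M M' t) (c : n → ℝ) :
    HasDerivAt (fun t => M t *ᵥ c) (M' *ᵥ c) t := by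
  rw [hasDerivAt_pi]
  intro i
  simp only [mulVec, dotProduct]
  exact HasDerivAt.fun_sum fun j _ => (hasDerivAt_pi.1 (hasDerivAt_pi.1 hM i) j).mul_const (c j)

theorem stmt_17_general (ω a : ℝ → V3) (hω : Continuous ω) (c : V3)
    (R : ℝ → M3) (V X : ℝ → V3)
    (hR0 : R 0 = 1) (hV0 : V 0 = 0) (hX0 : X 0 = 0)
    (hRd : ∀ t, HasDerivAt R (R t * skew (ω t)) t)
    (hVd : ∀ t, HasDerivAt V (R t *ᵥ a t) t)
    (hXd : ∀ t, HasDerivAt X (V t) t)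
    (R' : ℝ → M3) (V' X' : ℝ → V3)
    (hR0' : R' 0 = 1) (hV0' : V' 0 = 0) (hX0' : X' 0 = 0)
    (hRd' : ∀ t, HasDerivAt R' (R' t * skew (ω t)) t)
    (hVd' : ∀ t, HasDerivAt V' (R' t *ᵥ (a t + c)) t)
    (hXd' : ∀ t, HasDerivAt X' (V' t) t) :
    ∀ t, R' t = R t ∧
      V' t = V t + (∫ s in (0:ℝ)..t, R s) *ᵥ c ∧
      X' t = X t + (∫ s in (0:ℝ)..t, (∫ u in (0:ℝ)..s, R u)) *ᵥ c := by
  have hR : R = R' := ODE_solution_unique_of_linear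
    (Matrix.continuous_toContinuousLinearMap_mulRight (continuous_skew.comp hω)) hRd hRd' 0
    (hR0.trans hR0'.symm)
  subst hR
  set P : ℝ → M3 := fun t => ∫ s in (0:ℝ)..t, R s
  have hRc : Continuous R := continuous_iff_continuousAt.2 fun t => (hRd t).continuousAt
  have hP : ∀ t, HasDerivAt P (R t) t := fun t => (hRc.integral_hasStrictDerivAt 0 t).hasDerivAt
  have hPc : Continuous P := continuous_iff_continuousAt.2 fun t => (hP t).continuousAt
  have hQ : ∀ t, HasDerivAt (fun t => ∫ s in (0:ℝ)..t, P s) (P t) t :=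
    fun t => (hPc.integral_hasStrictDerivAt 0 t).hasDerivAt
  have hV : V' = fun t => V t + P t *ᵥ c :=
    eq_of_forall_hasDerivAt hVd'
      (fun t => ((hVd t).add ((hP t).mulVec_const c)).congr_deriv (mulVec_add _ _ _).symm) 0
      (by simp [P, hV0, hV0'])
  have hX : X' = fun t => X t + (∫ s in (0:ℝ)..t, P s) *ᵥ c :=
    eq_of_forall_hasDerivAt hXd'
      (fun t => ((hXd t).add ((hQ t).mulVec_const c)).congr_deriv (congrFun hV t).symm) 0
      (by simp [hX0, hX0'])
  exact fun t => ⟨rfl, congrFun hV t, congrFun hX t⟩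

/-- exact preintegration under accelerometer bias correction:
with the same gyro inputs, shifting the accelerometer input by a constant `c`
shifts the preintegrated quantities affinely in `c`, with no approximation. -/
theorem stmt_17 (ω a : ℝ → V3) (hω : Continuous ω) (ha : Continuous a) (c : V3)
    (R : ℝ → M3) (V X : ℝ → V3)
    (hR0 : R 0 = 1) (hV0 : V 0 = 0) (hX0 : X 0 = 0)
    (hRd : ∀ t, HasDerivAt R (R t * skew (ω t)) t)
    (hVd : ∀ t, HasDerivAt V (R t *ᵥ a t) t)
    (hXd : ∀ t, HasDerivAt X (V t) t)
    (R' : ℝ → M3) (V' X' : ℝ → V3)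
    (hR0' : R' 0 = 1) (hV0' : V' 0 = 0) (hX0' : X' 0 = 0)
    (hRd' : ∀ t, HasDerivAt R' (R' t * skew (ω t)) t)
    (hVd' : ∀ t, HasDerivAt V' (R' t *ᵥ (a t + c)) t)
    (hXd' : ∀ t, HasDerivAt X' (V' t) t) :
    ∀ t, R' t = R t ∧
      V' t = V t + (∫ s in (0:ℝ)..t, R s) *ᵥ c ∧
      X' t = X t + (∫ s in (0:ℝ)..t, (∫ u in (0:ℝ)..s, R u)) *ᵥ c :=
  stmt_17_general ω a hω c R V X hR0 hV0 hX0 hRd hVd hXd R' V' X' hR0' hV0' hX0' hRd' hVd' hXd'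
end
end
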